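/- Specialization to log-moneyness one: for all K > 0 and σ > 0, C_BS(e·K, K, σ) = (e − 1)·K + e·K·F(σ√T). -/

import Mathlib

open Real Set Filter

/-- Standard normal cdf. -/
noncomputable def stdNormalCDF (x : ℝ) : ℝ :=
  ∫ t in Set.Iio x, Real.exp (-t ^ 2 / 2) / Real.sqrt (2 * Real.pi)

/-- Black–Scholes call price with maturity `T`. -/
noncomputable def C_BS (T S K σ : ℝ) : ℝ :=
  S * stdNormalCDF (Real.log (S / K) / (σ * Real.sqrt T) + σ * Real.sqrt T / 2) -
  K * stdNormalCDF (Real.log (S / K) / (σ * Real.sqrt T) - σ * Real.sqrt T / 2)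

/-- Standard normal density. -/
noncomputable def stdNormalPDF (x : ℝ) : ℝ :=
  Real.exp (-x ^ 2 / 2) / Real.sqrt (2 * Real.pi)

/-- `F x = ∫_0^x φ(1/v + v/2) dv`. -/
noncomputable def F (x : ℝ) : ℝ :=
  ∫ v in (0 : ℝ)..x, stdNormalPDF (1 / v + v / 2)

/-! With `s = σ √T` and log-moneyness `k > 0`, the price is `K (eᵏ N(k/s + s/2) − N(k/s − s/2))`.
Since `φ(k/s − s/2) = eᵏ φ(k/s + s/2)`, the `s`-derivative of the bracket (the vega) is just
`eᵏ φ(k/s + s/2)`, and as `s → 0⁺` the bracket tends to its intrinsic value `eᵏ − 1`.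
Integrating the vega from `0` to `s` and taking `k = 1` gives the formula. -/

open MeasureTheory ProbabilityTheory Topology

lemma stdNormalPDF_eq_gaussianPDFReal : stdNormalPDF = gaussianPDFReal 0 1 := by
  ext x
  simp [stdNormalPDF, gaussianPDFReal, div_eq_inv_mul]

lemma continuous_stdNormalPDF : Continuous stdNormalPDF := by
  unfold stdNormalPDF
  fun_prop

lemma stdNormalPDF_nonneg (x : ℝ) : 0 ≤ stdNormalPDF x := by
  unfold stdNormalPDF
  positivity

lemma stdNormalPDF_le (x : ℝ) : stdNormalPDF x ≤ 1 / √(2 * π) := by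
  unfold stdNormalPDF
  gcongr
  exact exp_le_one_iff.2 (by nlinarith [sq_nonneg x])

lemma integrable_stdNormalPDF : Integrable stdNormalPDF := by
  rw [stdNormalPDF_eq_gaussianPDFReal]
  exact integrable_gaussianPDFReal 0 1

lemma integral_stdNormalPDF : ∫ x, stdNormalPDF x = 1 := by
  rw [stdNormalPDF_eq_gaussianPDFReal]
  exact integral_gaussianPDFReal_eq_one 0 one_ne_zero

lemma stdNormalPDF_sub (x y : ℝ) :
    stdNormalPDF (x - y) = exp (x * y - y ^ 2 / 2) * stdNormalPDF x := by
  unfold stdNormalPDF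
  rw [← mul_div_assoc, ← exp_add]
  ring_nf

lemma intervalIntegrable_stdNormalPDF_comp {f : ℝ → ℝ} (hf : Measurable f) (a b : ℝ) :
    IntervalIntegrable (fun v => stdNormalPDF (f v)) volume a b := by
  refine (intervalIntegrable_const (c := 1 / √(2 * π))).mono_fun
    (continuous_stdNormalPDF.measurable.comp hf).aestronglyMeasurable
    (ae_of_all _ fun v => ?_)
  dsimp only
  rw [norm_of_nonneg (stdNormalPDF_nonneg _), norm_of_nonneg (by positivity)]
  exact stdNormalPDF_le _

lemma stdNormalCDF_sub_stdNormalCDF (x y : ℝ) :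
    stdNormalCDF y - stdNormalCDF x = ∫ t in x..y, stdNormalPDF t := by
  simp only [stdNormalCDF, ← integral_Iic_eq_integral_Iio]
  exact intervalIntegral.integral_Iic_sub_Iic integrable_stdNormalPDF.integrableOn
    integrable_stdNormalPDF.integrableOn

lemma hasDerivAt_stdNormalCDF (x : ℝ) : HasDerivAt stdNormalCDF (stdNormalPDF x) x := by
  have hprimitive : HasDerivAt (fun y => stdNormalCDF 0 + ∫ t in (0 : ℝ)..y, stdNormalPDF t)
      (stdNormalPDF x) x :=
    (continuous_stdNormalPDF.integral_hasStrictDerivAt 0 x).hasDerivAt.const_add _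
  refine hprimitive.congr_of_eventuallyEq (Eventually.of_forall fun y => ?_)
  dsimp only
  rw [← stdNormalCDF_sub_stdNormalCDF]
  ring

lemma tendsto_stdNormalCDF_atTop : Tendsto stdNormalCDF atTop (𝓝 1) := by
  have h := tendsto_setIntegral_of_monotone (μ := volume) (f := stdNormalPDF)
    (fun _ => measurableSet_Iio) (fun _ _ hab => Iio_subset_Iio hab)
    (by rw [iUnion_Iio]; exact integrable_stdNormalPDF.integrableOn)
  rwa [iUnion_Iio, Measure.restrict_univ, integral_stdNormalPDF] at h

noncomputable def normalizedCall (k s : ℝ) : ℝ :=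
  exp k * stdNormalCDF (k / s + s / 2) - stdNormalCDF (k / s - s / 2)

lemma C_BS_exp_mul_eq {K : ℝ} (hK : K ≠ 0) (T k σ : ℝ) :
    C_BS T (exp k * K) K σ = K * normalizedCall k (σ * √T) := by
  rw [C_BS, normalizedCall, mul_div_cancel_right₀ _ hK, log_exp]
  ring

lemma hasDerivAt_normalizedCall (k : ℝ) {s : ℝ} (hs : s ≠ 0) :
    HasDerivAt (normalizedCall k) (exp k * stdNormalPDF (k / s + s / 2)) s := by
  have hd : HasDerivAt (fun v => k / v) (-(k / s ^ 2)) s := by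
    simpa [div_eq_mul_inv] using (hasDerivAt_inv hs).const_mul k
  have hd₁ : HasDerivAt (fun v => stdNormalCDF (k / v + v / 2))
      (stdNormalPDF (k / s + s / 2) * (-(k / s ^ 2) + 1 / 2)) s :=
    (hasDerivAt_stdNormalCDF _).comp s (hd.add ((hasDerivAt_id' s).div_const 2))
  have hd₂ : HasDerivAt (fun v => stdNormalCDF (k / v - v / 2))
      (stdNormalPDF (k / s - s / 2) * (-(k / s ^ 2) - 1 / 2)) s :=
    (hasDerivAt_stdNormalCDF _).comp s (hd.sub ((hasDerivAt_id' s).div_const 2))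
  refine ((hd₁.const_mul (exp k)).sub hd₂).congr_deriv ?_
  have hshift : stdNormalPDF (k / s - s / 2) = exp k * stdNormalPDF (k / s + s / 2) := by
    rw [show k / s - s / 2 = (k / s + s / 2) - s by ring, stdNormalPDF_sub]
    congr 2
    field_simp
    ring
  rw [hshift]
  ring

lemma tendsto_normalizedCall_nhdsGT_zero {k : ℝ} (hk : 0 < k) :
    Tendsto (normalizedCall k) (𝓝[>] 0) (𝓝 (exp k - 1)) := by
  have hks : Tendsto (fun s : ℝ => k / s) (𝓝[>] 0) atTop := by
    simpa [div_eq_mul_inv] using tendsto_inv_nhdsGT_zero.const_mul_atTop hk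
  have hhalf : Tendsto (fun s : ℝ => s / 2) (𝓝[>] 0) (𝓝 0) :=
    ((continuous_id.div_const (2 : ℝ)).tendsto' 0 0 (zero_div 2)).mono_left
      nhdsWithin_le_nhds
  have hd₁ : Tendsto (fun s => stdNormalCDF (k / s + s / 2)) (𝓝[>] 0) (𝓝 1) :=
    tendsto_stdNormalCDF_atTop.comp (hks.atTop_add hhalf)
  have hd₂ : Tendsto (fun s => stdNormalCDF (k / s - s / 2)) (𝓝[>] 0) (𝓝 1) :=
    tendsto_stdNormalCDF_atTop.comp (by simpa only [sub_eq_add_neg] using hks.atTop_add hhalf.neg)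
  have hcall := (hd₁.const_mul (exp k)).sub hd₂
  rw [mul_one] at hcall
  exact hcall

lemma integral_exp_mul_stdNormalPDF {k s : ℝ} (hk : 0 < k) (hs : 0 < s) :
    ∫ v in (0 : ℝ)..s, exp k * stdNormalPDF (k / v + v / 2) =
      normalizedCall k s - (exp k - 1) :=
  intervalIntegral.integral_eq_sub_of_hasDerivAt_of_tendsto hs
    (fun _ hv => hasDerivAt_normalizedCall k hv.1.ne')
    ((intervalIntegrable_stdNormalPDF_comp (by fun_prop) 0 s).const_mul _)
    (tendsto_normalizedCall_nhdsGT_zero hk)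
    ((hasDerivAt_normalizedCall k hs.ne').continuousAt.tendsto.mono_left nhdsWithin_le_nhds)

/-- Specialization of the Black–Scholes price to log-moneyness one. -/
theorem C_BS_log_moneyness_one (T : ℝ) (hT : 0 < T) (K σ : ℝ)
    (hK : 0 < K) (hσ : 0 < σ) :
    C_BS T (Real.exp 1 * K) K σ =
      (Real.exp 1 - 1) * K + Real.exp 1 * K * F (σ * Real.sqrt T) := by
  have hs : 0 < σ * √T := mul_pos hσ (sqrt_pos.2 hT)
  have hF : exp 1 * F (σ * √T) = normalizedCall 1 (σ * √T) - (exp 1 - 1) := by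
    rw [F, ← intervalIntegral.integral_const_mul]
    exact integral_exp_mul_stdNormalPDF one_pos hs
  rw [C_BS_exp_mul_eq hK.ne']
  linear_combination -K * hF
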